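/- Let n ≥ 3 and let U ⊆ ℝⁿ be a connected open set on which the coordinates x¹,…,xⁿ are pairwise distinct and non-zero at every point. Let L = diag(x¹,…,xⁿ) and let g = diag(g₁,…,g_n) be a smooth metric (each g_i nowhere zero on U). Suppose that the metrics gL^{-k} are flat for all k = 0, 1, …, n+1. Then ∂g_i/∂x^j = 0 for all i ≠ j, i.e. each component g_i depends only on the coordinate x^i. -/

import Mathlib

open scoped BigOperators

/-- Partial derivative `∂_k f` at `x`. -/
noncomputable def pd {n : ℕ} (f : (Fin n → ℝ) → ℝ) (k : Fin n) (x : Fin n → ℝ) : ℝ :=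
  fderiv ℝ f x (Pi.single k 1)

/-- Christoffel symbols `Γ^i_{jk}` of a metric `g`. -/
noncomputable def Christoffel {n : ℕ} (g : (Fin n → ℝ) → Matrix (Fin n) (Fin n) ℝ)
    (i j k : Fin n) (x : Fin n → ℝ) : ℝ :=
  (1 / 2) * ∑ s, (g x)⁻¹ i s *
    (pd (fun y => g y s k) j x + pd (fun y => g y s j) k x - pd (fun y => g y j k) s x)

/-- Curvature tensor `R^l_{ijk}` of a metric `g`. -/
noncomputable def Curv {n : ℕ} (g : (Fin n → ℝ) → Matrix (Fin n) (Fin n) ℝ)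
    (l i j k : Fin n) (x : Fin n → ℝ) : ℝ :=
  pd (Christoffel g l i k) j x - pd (Christoffel g l i j) k x
    + ∑ s, (Christoffel g l j s x * Christoffel g s i k x
        - Christoffel g l k s x * Christoffel g s i j x)

/-- `g` is a (smooth pseudo-Riemannian) metric on `U`. -/
def IsMetricOn {n : ℕ} (g : (Fin n → ℝ) → Matrix (Fin n) (Fin n) ℝ)
    (U : Set (Fin n → ℝ)) : Prop :=
  (∀ i j, ContDiffOn ℝ (⊤ : ℕ∞) (fun x => g x i j) U) ∧
    (∀ x ∈ U, (g x).IsSymm) ∧ ∀ x ∈ U, (g x).det ≠ 0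

/-- The metric `g` is flat on `U`. -/
def IsFlatOn {n : ℕ} (g : (Fin n → ℝ) → Matrix (Fin n) (Fin n) ℝ)
    (U : Set (Fin n → ℝ)) : Prop :=
  ∀ x ∈ U, ∀ l i j k : Fin n, Curv g l i j k x = 0

/-- The metric `g` has constant curvature `K` on `U`:
`g^{js} R^i_{skm} = K (δ^i_k δ^j_m − δ^i_m δ^j_k)`. -/
def HasConstCurvOn {n : ℕ} (g : (Fin n → ℝ) → Matrix (Fin n) (Fin n) ℝ)
    (U : Set (Fin n → ℝ)) (K : ℝ) : Prop :=
  ∀ x ∈ U, ∀ i j k m : Fin n,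
    (∑ s, (g x)⁻¹ j s * Curv g i s k m x)
      = K * ((if i = k then (1:ℝ) else 0) * (if j = m then (1:ℝ) else 0)
          - (if i = m then (1:ℝ) else 0) * (if j = k then (1:ℝ) else 0))

/-- `λ = ½ tr L`. -/
noncomputable def lamL {n : ℕ} (L : (Fin n → ℝ) → Matrix (Fin n) (Fin n) ℝ)
    (x : Fin n → ℝ) : ℝ :=
  (1 / 2) * ∑ i, L x i i

/-- `L_{ij} = L^s_i g_{sj}`. -/
noncomputable def lowL {n : ℕ} (g L : (Fin n → ℝ) → Matrix (Fin n) (Fin n) ℝ)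
    (x : Fin n → ℝ) (i j : Fin n) : ℝ :=
  ∑ s, L x s i * g x s j

/-- `∇_k L_{ij} = ∂_k L_{ij} − Γ^s_{ki} L_{sj} − Γ^s_{kj} L_{is}`. -/
noncomputable def covL {n : ℕ} (g L : (Fin n → ℝ) → Matrix (Fin n) (Fin n) ℝ)
    (k i j : Fin n) (x : Fin n → ℝ) : ℝ :=
  pd (fun y => lowL g L y i j) k x
    - ∑ s, Christoffel g s k i x * lowL g L x s j
    - ∑ s, Christoffel g s k j x * lowL g L x i s

/-- `L` is geodesically compatible with `g` on `U`: it is smooth, `L_{ij}` is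
symmetric, and `∇_k L_{ij} = λ_i g_{jk} + λ_j g_{ik}` with `λ = ½ tr L`. -/
def GeodCompatOn {n : ℕ} (g L : (Fin n → ℝ) → Matrix (Fin n) (Fin n) ℝ)
    (U : Set (Fin n → ℝ)) : Prop :=
  (∀ i j, ContDiffOn ℝ (⊤ : ℕ∞) (fun x => L x i j) U) ∧
    (∀ x ∈ U, ∀ i j, lowL g L x i j = lowL g L x j i) ∧
    ∀ x ∈ U, ∀ k i j, covL g L k i j x
      = pd (lamL L) i x * g x j k + pd (lamL L) j x * g x i k

/-- `h` is a Casimir of the constant-curvature (curvature `K`) metric `g`: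
`g^{is} (∂_s ∂_j h − Γ^r_{sj} ∂_r h) + K h δ^i_j = 0`. -/
def IsCasimirOn {n : ℕ} (g : (Fin n → ℝ) → Matrix (Fin n) (Fin n) ℝ) (K : ℝ)
    (U : Set (Fin n → ℝ)) (h : (Fin n → ℝ) → ℝ) : Prop :=
  ContDiffOn ℝ (⊤ : ℕ∞) h U ∧
    ∀ x ∈ U, ∀ i j : Fin n,
      (∑ s, (g x)⁻¹ i s * (pd (pd h j) s x - ∑ r, Christoffel g r s j x * pd h r x))
        + K * h x * (if i = j then (1:ℝ) else 0) = 0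


section AuxLemmas
variable {n : ℕ}


lemma pd_congr {f g : (Fin n → ℝ) → ℝ} {x : Fin n → ℝ} (h : f =ᶠ[nhds x] g) (k : Fin n) :
    pd f k x = pd g k x := by
  unfold pd; rw [h.fderiv_eq]

lemma pd_const (c : ℝ) (k : Fin n) (x : Fin n → ℝ) : pd (fun _ => c) k x = 0 := by
  simp [pd]

lemma pd_mul {f g : (Fin n → ℝ) → ℝ} {x : Fin n → ℝ} (hf : DifferentiableAt ℝ f x)
    (hg : DifferentiableAt ℝ g x) (k : Fin n) :
    pd (fun y => f y * g y) k x = pd f k x * g x + f x * pd g k x := by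
  unfold pd
  rw [fderiv_fun_mul hf hg]
  simp
  ring

lemma diffAt_coord {φ : ℝ → ℝ} {x : Fin n → ℝ} (s : Fin n) (hφ : DifferentiableAt ℝ φ (x s)) :
    DifferentiableAt ℝ (fun y : Fin n → ℝ => φ (y s)) x :=
  hφ.comp x (ContinuousLinearMap.proj (R := ℝ) (φ := fun _ : Fin n => ℝ) s).differentiableAt

lemma pd_comp_coord {φ : ℝ → ℝ} {x : Fin n → ℝ} (i k : Fin n) (hφ : DifferentiableAt ℝ φ (x i)) :
    pd (fun y => φ (y i)) k x = if i = k then deriv φ (x i) else 0 := by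
  unfold pd
  have hproj : DifferentiableAt ℝ (fun y : Fin n → ℝ => y i) x :=
    (ContinuousLinearMap.proj (R := ℝ) (φ := fun _ : Fin n => ℝ) i).differentiableAt
  have h1 : (fun y : Fin n → ℝ => φ (y i)) = φ ∘ (fun y : Fin n → ℝ => y i) := rfl
  rw [h1, fderiv_comp x hφ hproj]
  have h2 : fderiv ℝ (fun y : Fin n → ℝ => y i) x
      = ContinuousLinearMap.proj (R := ℝ) (φ := fun _ : Fin n => ℝ) i :=
    (ContinuousLinearMap.proj (R := ℝ) (φ := fun _ : Fin n => ℝ) i).fderiv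
  rw [h2, ContinuousLinearMap.comp_apply, ContinuousLinearMap.proj_apply, Pi.single_apply]
  split_ifs with h
  · exact fderiv_apply_one_eq_deriv
  · simp

lemma pd_coord_pow {x : Fin n → ℝ} (i k : Fin n) (m : ℕ) :
    pd (fun y => (y i)^m) k x = if i = k then (m : ℝ) * (x i)^(m-1) else 0 := by
  rw [pd_comp_coord i k (differentiableAt_pow m)]
  simp [deriv_pow]

lemma pd_coord_pow_inv {x : Fin n → ℝ} (i k : Fin n) (m : ℕ) (hx : x i ≠ 0) :
    pd (fun y => ((y i)^m)⁻¹) k x = if i = k then -(m : ℝ) / x i * ((x i)^m)⁻¹ else 0 := by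
  have h := pd_comp_coord (x := x) (φ := fun t : ℝ => (t ^ m)⁻¹) i k
    ((differentiableAt_pow m).inv (pow_ne_zero m hx))
  beta_reduce at h
  rw [h]
  congr 1
  rw [deriv_fun_inv'' (differentiableAt_pow (𝕜 := ℝ) (x := x i) m) (pow_ne_zero m hx), deriv_pow_field (𝕜 := ℝ)]
  cases m with
  | zero => simp
  | succ m =>
      have h1 : x i ^ (m+1-1) = x i ^ (m+1) / x i := by rw [pow_succ]; field_simp; simp
      rw [h1]; field_simp

lemma diag_inv {v : Fin n → ℝ} (hv : ∀ s, v s ≠ 0) :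
    (Matrix.diagonal v)⁻¹ = Matrix.diagonal (fun s => (v s)⁻¹) := by
  apply Matrix.inv_eq_right_inv
  rw [Matrix.diagonal_mul_diagonal]
  have h : (fun s => v s * (v s)⁻¹) = fun _ => (1:ℝ) := by
    funext s; exact mul_inv_cancel₀ (hv s)
  rw [h, Matrix.diagonal_one]

lemma christoffel_diag (v : (Fin n → ℝ) → Fin n → ℝ) {x : Fin n → ℝ} (hv : ∀ s, v x s ≠ 0)
    (i j k : Fin n) :
    Christoffel (fun y => Matrix.diagonal (v y)) i j k x
      = (1/2) * (v x i)⁻¹ * ((if i = k then pd (fun y => v y i) j x else 0)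
          + (if i = j then pd (fun y => v y i) k x else 0)
          - (if j = k then pd (fun y => v y j) i x else 0)) := by
  unfold Christoffel
  have hpd : ∀ (s t u : Fin n), pd (fun y => Matrix.diagonal (v y) s t) u x
      = if s = t then pd (fun y => v y s) u x else 0 := by
    intro s t u
    by_cases h : s = t
    · subst h
      have he : (fun y => Matrix.diagonal (v y) s s) = fun y => v y s := by
        funext y; exact Matrix.diagonal_apply_eq _ s
      rw [he, if_pos rfl]
    · have he : (fun y => Matrix.diagonal (v y) s t) = fun _ => (0:ℝ) := by
        funext y; exact Matrix.diagonal_apply_ne _ h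
      rw [he, if_neg h, pd_const]
  have hinv : (Matrix.diagonal (v x))⁻¹ = Matrix.diagonal (fun s => (v x s)⁻¹) := diag_inv hv
  rw [hinv]
  rw [Finset.sum_eq_single i]
  · rw [Matrix.diagonal_apply_eq, hpd i k j, hpd i j k, hpd j k i]
    ring_nf
  · intro s _ hs
    rw [Matrix.diagonal_apply_ne _ (Ne.symm hs), zero_mul]
  · intro h; exact absurd (Finset.mem_univ i) h

lemma christoffel_congr {g1 g2 : (Fin n → ℝ) → Matrix (Fin n) (Fin n) ℝ} {U : Set (Fin n → ℝ)}
    (hU : IsOpen U) (h : ∀ y ∈ U, g1 y = g2 y) (i j k : Fin n) :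
    ∀ y ∈ U, Christoffel g1 i j k y = Christoffel g2 i j k y := by
  intro y hy
  unfold Christoffel
  rw [h y hy]
  congr 1
  apply Finset.sum_congr rfl
  intro s _
  congr 1
  have hev : ∀ (a b : Fin n), (fun z => g1 z a b) =ᶠ[nhds y] (fun z => g2 z a b) :=
    fun a b => Filter.eventually_of_mem (hU.mem_nhds hy) (fun z hz => by simp only [h z hz])
  rw [pd_congr (hev s k) j, pd_congr (hev s j) k, pd_congr (hev j k) s]

lemma curv_congr {g1 g2 : (Fin n → ℝ) → Matrix (Fin n) (Fin n) ℝ} {U : Set (Fin n → ℝ)}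
    (hU : IsOpen U) (h : ∀ y ∈ U, g1 y = g2 y) (l i j k : Fin n) {x : Fin n → ℝ} (hx : x ∈ U) :
    Curv g1 l i j k x = Curv g2 l i j k x := by
  unfold Curv
  have hev : ∀ (a b c : Fin n), Christoffel g1 a b c =ᶠ[nhds x] Christoffel g2 a b c :=
    fun a b c => Filter.eventually_of_mem (hU.mem_nhds hx)
      (fun z hz => christoffel_congr hU h a b c z hz)
  rw [pd_congr (hev l i k) j, pd_congr (hev l i j) k]
  congr 1
  apply Finset.sum_congr rfl
  intro s _
  rw [christoffel_congr hU h l j s x hx, christoffel_congr hU h s i k x hx,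
    christoffel_congr hU h l k s x hx, christoffel_congr hU h s i j x hx]

lemma pd_smooth {U : Set (Fin n → ℝ)} (hU : IsOpen U) {f : (Fin n → ℝ) → ℝ}
    (hf : ContDiffOn ℝ (⊤ : ℕ∞) f U) (k : Fin n) : ContDiffOn ℝ (⊤ : ℕ∞) (fun y => pd f k y) U :=
  (hf.fderiv_of_isOpen hU (by simp)).clm_apply contDiffOn_const

lemma cd_diffAt {U : Set (Fin n → ℝ)} (hU : IsOpen U) {f : (Fin n → ℝ) → ℝ}
    (hf : ContDiffOn ℝ (⊤ : ℕ∞) f U) {x : Fin n → ℝ} (hx : x ∈ U) : DifferentiableAt ℝ f x :=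
  (hf.contDiffAt (hU.mem_nhds hx)).differentiableAt (by simp)



lemma vand_aux (x : Fin n → ℝ) (j : Fin n) (T : Finset (Fin n)) (hj : j ∉ T) (K : ℕ)
    (a : Fin n → ℝ) (b : ℝ)
    (h0 : ∀ m ≤ K, (∑ s, a s * x s ^ m) + b * m * x j ^ m = 0) :
    ∃ a' : Fin n → ℝ, (∀ s ∈ T, a' s = 0) ∧
      ∀ m, m + T.card ≤ K →
        (∑ s, a' s * x s ^ m) + (b * ∏ c ∈ T, (x j - x c)) * m * x j ^ m = 0 := by
  induction T using Finset.induction with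
  | empty =>
      exact ⟨a, by simp, fun m hm => by simpa using h0 m (by simpa using hm)⟩
  | @insert t T' ht IH =>
      have hjT' : j ∉ T' := fun h => hj (Finset.mem_insert_of_mem h)
      have hjt : j ≠ t := fun h => hj (h ▸ Finset.mem_insert_self t T')
      obtain ⟨a', hz, hfin⟩ := IH hjT'
      set B := b * ∏ c ∈ T', (x j - x c) with hB
      refine ⟨fun s => a' s * (x s - x t) + (if s = j then B * x j else 0), ?_, ?_⟩
      · intro s hs
        rcases Finset.mem_insert.1 hs with h | h
        · subst h; simp [if_neg (Ne.symm hjt)]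
        · simp [hz s h, if_neg (fun hsj : s = j => hjT' (hsj ▸ h))]
      · intro m hm
        rw [Finset.card_insert_of_notMem ht] at hm
        have e1 := hfin m (by omega)
        have e2 := hfin (m + 1) (by omega)
        push_cast at e2
        have hsum : ∑ s, (a' s * (x s - x t) + if s = j then B * x j else 0) * x s ^ m
            = (∑ s, a' s * (x s - x t) * x s ^ m) + B * x j * x j ^ m := by
          have hpt : ∀ s, (a' s * (x s - x t) + if s = j then B * x j else 0) * x s ^ m
              = a' s * (x s - x t) * x s ^ m + (if s = j then B * x j * x s ^ m else 0) := by
            intro s; split_ifs <;> ring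
          simp_rw [hpt]
          rw [Finset.sum_add_distrib, Finset.sum_ite_eq' Finset.univ j fun s => B * x j * x s ^ m]
          simp
        have hsub : (∑ s, a' s * x s ^ (m+1)) - x t * (∑ s, a' s * x s ^ m)
            = ∑ s, a' s * (x s - x t) * x s ^ m := by
          rw [Finset.mul_sum, ← Finset.sum_sub_distrib]
          apply Finset.sum_congr rfl
          intro s _
          rw [pow_succ]
          ring
        have hBB : b * ∏ c ∈ insert t T', (x j - x c) = (x j - x t) * B := by
          rw [Finset.prod_insert ht, hB]; ring
        rw [hsum, hBB, ← hsub]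
        linear_combination e2 - x t * e1

lemma vand_key (x : Fin n → ℝ) (i j : Fin n) (hij : i ≠ j)
    (hdist : ∀ s t : Fin n, s ≠ t → x s ≠ x t) (hxj : x j ≠ 0)
    (c : Fin n → ℝ) (di dj : ℝ)
    (h : ∀ m ≤ n + 1, (∑ s, c s * x s ^ m) + di * m * x i ^ m + dj * m * x j ^ m = 0) :
    dj = 0 := by
  have hn : 1 ≤ n := i.pos
  -- step 1 : one difference with node x i
  set a1 : Fin n → ℝ := fun s => c s * (x s - x i)
      + (if s = i then di * x i else 0) + (if s = j then dj * x j else 0) with ha1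
  have h1 : ∀ m ≤ n, (∑ s, a1 s * x s ^ m) + (dj * (x j - x i)) * m * x j ^ m = 0 := by
    intro m hm
    have e1 := h m (by omega)
    have e2 := h (m + 1) (by omega)
    push_cast at e2
    have hsum : ∑ s, a1 s * x s ^ m
        = (∑ s, c s * (x s - x i) * x s ^ m) + di * x i * x i ^ m + dj * x j * x j ^ m := by
      have hpt : ∀ s, a1 s * x s ^ m
          = c s * (x s - x i) * x s ^ m + (if s = i then di * x i * x s ^ m else 0)
            + (if s = j then dj * x j * x s ^ m else 0) := by
        intro s
        have hb : a1 s = c s * (x s - x i) + (if s = i then di * x i else 0)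
            + (if s = j then dj * x j else 0) := rfl
        rw [hb]
        split_ifs <;> ring
      simp_rw [hpt]
      rw [Finset.sum_add_distrib, Finset.sum_add_distrib,
        Finset.sum_ite_eq' Finset.univ i fun s => di * x i * x s ^ m,
        Finset.sum_ite_eq' Finset.univ j fun s => dj * x j * x s ^ m]
      simp
    have hsub : (∑ s, c s * x s ^ (m+1)) - x i * (∑ s, c s * x s ^ m)
        = ∑ s, c s * (x s - x i) * x s ^ m := by
      rw [Finset.mul_sum, ← Finset.sum_sub_distrib]
      exact Finset.sum_congr rfl fun s _ => by rw [pow_succ]; ring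
    rw [hsum, ← hsub]
    linear_combination e2 - x i * e1
  obtain ⟨a', hz, hfin⟩ := vand_aux x j (Finset.univ.erase j) (Finset.notMem_erase j _) n
    a1 (dj * (x j - x i)) h1
  have hcard : (Finset.univ.erase j).card = n - 1 := by
    rw [Finset.card_erase_of_mem (Finset.mem_univ j), Finset.card_univ, Fintype.card_fin]
  have e0 := hfin 0 (by omega)
  have e1 := hfin 1 (by omega)
  simp only [pow_zero, mul_one, Nat.cast_zero, Nat.cast_one, mul_zero, add_zero, pow_one] at e0 e1
  have haz : ∀ s, s ≠ j → a' s = 0 := fun s hs => hz s (Finset.mem_erase.2 ⟨hs, Finset.mem_univ s⟩)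
  have hsum0 : (∑ s, a' s) = a' j := by
    rw [Finset.sum_eq_single j (fun s _ hs => haz s hs) (fun h => absurd (Finset.mem_univ j) h)]
  have hsum1 : (∑ s, a' s * x s) = a' j * x j := by
    rw [Finset.sum_eq_single j (fun s _ hs => by rw [haz s hs, zero_mul])
      (fun h => absurd (Finset.mem_univ j) h)]
  rw [hsum0] at e0
  rw [hsum1] at e1
  have hBz : (dj * (x j - x i) * ∏ c ∈ Finset.univ.erase j, (x j - x c)) * x j = 0 := by
    rw [e0] at e1
    linarith [e1]
  have hprod : (∏ c ∈ Finset.univ.erase j, (x j - x c)) ≠ 0 := by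
    apply Finset.prod_ne_zero_iff.2
    intro s hs
    exact sub_ne_zero_of_ne (hdist j s (Ne.symm (Finset.mem_erase.1 hs).1))
  have hji : x j - x i ≠ 0 := sub_ne_zero_of_ne (hdist j i (Ne.symm hij))
  by_contra hdj
  exact (mul_ne_zero (mul_ne_zero (mul_ne_zero hdj hji) hprod) hxj) hBz

end AuxLemmas

set_option maxHeartbeats 1000000 in
/-- if `L = diag(x¹,…,xⁿ)`, `g = diag(g₁,…,g_n)` and all metrics
`gL^{-k}`, `k = 0,…,n+1`, are flat, then each `g_i` depends only on `x^i`. -/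
theorem stmt_18 {n : ℕ} (hn : 3 ≤ n) (U : Set (Fin n → ℝ)) (hUo : IsOpen U)
    (hUc : IsConnected U)
    (hdist : ∀ x ∈ U, ∀ i j : Fin n, i ≠ j → x i ≠ x j)
    (hnz : ∀ x ∈ U, ∀ i : Fin n, x i ≠ 0)
    (gd : (Fin n → ℝ) → Fin n → ℝ)
    (hgs : ∀ i, ContDiffOn ℝ (⊤ : ℕ∞) (fun x => gd x i) U)
    (hgnz : ∀ x ∈ U, ∀ i, gd x i ≠ 0)
    (hflat : ∀ k ≤ n + 1,
      IsFlatOn (fun x => Matrix.diagonal (gd x) * (Matrix.diagonal x ^ k)⁻¹) U) :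
    ∀ x ∈ U, ∀ i j : Fin n, i ≠ j → pd (fun y => gd y i) j x = 0 := by
  intro x hx i j hij
  have hxne : ∀ s, x s ≠ 0 := fun s => hnz x hx s
  have hgne : ∀ s, gd x s ≠ 0 := fun s => hgnz x hx s
  set β : Fin n → Fin n → ℝ := fun s t => pd (fun z => gd z s) t x / (2 * gd x s) with hβ
  set a : Fin n → ℝ := fun s => -(pd (fun z => gd z j) s x) / (2 * gd x s) with ha
  set A : (Fin n → ℝ) → ℝ := fun y => -(pd (fun z => gd z j) i y) / (2 * gd y i) with hA
  set B : (Fin n → ℝ) → ℝ := fun y => pd (fun z => gd z i) j y / (2 * gd y i) with hB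
  have hAx : A x = a i := rfl
  have hBx : B x = β i j := rfl
  have hAs : ContDiffOn ℝ (⊤ : ℕ∞) A U := by
    rw [hA]
    exact ContDiffOn.div (pd_smooth hUo (hgs j) i).neg (contDiffOn_const.mul (hgs i))
      (fun y hy => mul_ne_zero two_ne_zero (hgnz y hy i))
  have hBs : ContDiffOn ℝ (⊤ : ℕ∞) B U := by
    rw [hB]
    exact ContDiffOn.div (pd_smooth hUo (hgs i) j) (contDiffOn_const.mul (hgs i))
      (fun y hy => mul_ne_zero two_ne_zero (hgnz y hy i))
  have hgdiff : ∀ y ∈ U, ∀ s, DifferentiableAt ℝ (fun z => gd z s) y :=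
    fun y hy s => cd_diffAt hUo (hgs s) hy
  have hvdm : ∀ m : ℕ, m ≤ n + 1 →
      (∑ s, (β i s * a s
        + (if s = i then pd A i x - β j i * a i else 0)
        + (if s = j then -(pd B j x) + β i j * β j j - β i j * a j - β i j * β i j else 0))
          * (x s)^m)
      + (a i / (2 * x i)) * (m : ℝ) * (x i)^m
      + (-(β i j) / (2 * x j)) * (m : ℝ) * (x j)^m = 0 := by
    intro m hm
    set v : (Fin n → ℝ) → Fin n → ℝ := fun y s => gd y s * ((y s)^m)⁻¹ with hv
    set M : (Fin n → ℝ) → Matrix (Fin n) (Fin n) ℝ := fun y => Matrix.diagonal (v y) with hM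
    have hvne : ∀ y ∈ U, ∀ s, v y s ≠ 0 := fun y hy s =>
      mul_ne_zero (hgnz y hy s) (inv_ne_zero (pow_ne_zero m (hnz y hy s)))
    have hmet : ∀ y ∈ U, Matrix.diagonal (gd y) * (Matrix.diagonal y ^ m)⁻¹ = M y := by
      intro y hy
      rw [Matrix.diagonal_pow]
      rw [diag_inv (v := y ^ m) (fun s => by simpa using pow_ne_zero m (hnz y hy s))]
      rw [Matrix.diagonal_mul_diagonal, hM]
      congr 1 <;> (try (funext s; simp [hv]))
    have hcurv0 : Curv M i j i j x = 0 := by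
      have h0 := hflat m hm x hx i j i j
      rw [curv_congr hUo hmet i j i j hx] at h0
      exact h0
    have hpdv : ∀ y ∈ U, ∀ s t, pd (fun z => v z s) t y
        = ((y s)^m)⁻¹ * (pd (fun z => gd z s) t y
            - (if s = t then (m:ℝ) * gd y s / y s else 0)) := by
      intro y hy s t
      have hveq : (fun z => v z s) = fun z => gd z s * ((z s)^m)⁻¹ := by
        funext z; rw [hv]
      have hd2 : DifferentiableAt ℝ (fun z : Fin n → ℝ => ((z s)^m)⁻¹) y :=
        diffAt_coord s ((differentiableAt_pow m).inv (pow_ne_zero m (hnz y hy s)))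
      rw [hveq, pd_mul (hgdiff y hy s) hd2 t, pd_coord_pow_inv s t m (hnz y hy s)]
      split_ifs with h
      · field_simp
        try ring
      · ring
    have hvinv : ∀ s, (v x s)⁻¹ = (gd x s)⁻¹ * (x s)^m := by
      intro s
      rw [hv]
      rw [mul_inv, inv_inv]
    -- Christoffel values
    have hvinvy : ∀ y ∈ U, ∀ s, (v y s)⁻¹ = (gd y s)⁻¹ * (y s)^m := by
      intro y hy s
      simp only [hv]
      rw [mul_inv, inv_inv]
    have hΓA : ∀ y ∈ U, Christoffel M i j j y = (y i)^m * ((y j)^m)⁻¹ * A y := by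
      intro y hy
      rw [hM, christoffel_diag v (hvne y hy) i j j, if_neg hij, if_pos (rfl : j = j),
        hpdv y hy j i, if_neg (Ne.symm hij), hvinvy y hy i]
      simp only [hA]
      field_simp [hgnz y hy i, hnz y hy i, hnz y hy j]
      try ring
      try exact Or.inl trivial
    have hΓB : ∀ y ∈ U, Christoffel M i j i y = B y := by
      intro y hy
      rw [hM, christoffel_diag v (hvne y hy) i j i, if_pos (rfl : i = i), if_neg hij,
        if_neg (Ne.symm hij), hpdv y hy i j, if_neg hij, hvinvy y hy i]
      simp only [hB]
      field_simp [hgnz y hy i, hnz y hy i]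
      try ring
    have hΓiis : ∀ s, Christoffel M i i s x
        = β i s - (if s = i then (m:ℝ)/(2 * x i) else 0) := by
      intro s
      by_cases h : i = s
      · subst h
        rw [hM, christoffel_diag v (hvne x hx) i i i, if_pos (rfl : i = i),
          hpdv x hx i i, if_pos (rfl : i = i), hvinv i]
        rw [if_pos (rfl : i = i)]
        simp only [hβ]
        field_simp [hgne i, hxne i]
        try ring
      · rw [hM, christoffel_diag v (hvne x hx) i i s, if_neg h, if_pos (rfl : i = i),
          hpdv x hx i s, if_neg h, hvinv i]
        rw [if_neg (Ne.symm h)]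
        simp only [hβ]
        field_simp [hgne i, hxne i]
        try ring
    have hΓsjj : ∀ s, s ≠ j → Christoffel M s j j x = (x s)^m * ((x j)^m)⁻¹ * a s := by
      intro s hsj
      rw [hM, christoffel_diag v (hvne x hx) s j j, if_neg hsj, if_pos (rfl : j = j),
        hpdv x hx j s, if_neg (Ne.symm hsj), hvinv s]
      simp only [ha]
      field_simp [hgne s, hxne s, hxne j]
      try ring
      try exact Or.inl trivial
    have hΓjjj : Christoffel M j j j x = β j j - (m:ℝ)/(2 * x j) := by
      rw [hM, christoffel_diag v (hvne x hx) j j j, if_pos (rfl : j = j),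
        hpdv x hx j j, if_pos (rfl : j = j), hvinv j]
      simp only [hβ]
      field_simp [hgne j, hxne j]
      try ring
    have hΓjji : Christoffel M j j i x = β j i := by
      rw [hM, christoffel_diag v (hvne x hx) j j i, if_neg (Ne.symm hij),
        if_pos (rfl : j = j), hpdv x hx j i, if_neg (Ne.symm hij), hvinv j]
      simp only [hβ]
      field_simp [hgne j, hxne j]
      try ring
    have hΓijs : ∀ s, s ≠ i → s ≠ j → Christoffel M i j s x = 0 := by
      intro s hsi hsj
      rw [hM, christoffel_diag v (hvne x hx) i j s, if_neg (Ne.symm hsi),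
        if_neg hij, if_neg (Ne.symm hsj)]
      ring
    have hΓsji : ∀ s, s ≠ i → s ≠ j → Christoffel M s j i x = 0 := by
      intro s hsi hsj
      rw [hM, christoffel_diag v (hvne x hx) s j i, if_neg hsi, if_neg hsj,
        if_neg (Ne.symm hij)]
      ring
    -- the sum
    have hsummand : ∀ s, Christoffel M i i s x * Christoffel M s j j x
          - Christoffel M i j s x * Christoffel M s j i x
        = ((x j)^m)⁻¹ * (β i s * a s * (x s)^m)
          + (if s = i then -((m:ℝ)/(2 * x i)) * ((x i)^m * ((x j)^m)⁻¹ * a i)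
              - β i j * β i j else 0)
          + (if s = j then β i j * β j j - (x i)^m * ((x j)^m)⁻¹ * a i * β j i
              - β i j * a j - β i j * ((m:ℝ)/(2 * x j)) else 0) := by
      intro s
      rcases eq_or_ne i s with rfl | hsi
      · rw [hΓiis i, if_pos rfl, hΓsjj i hij, hΓB x hx, hBx, if_pos rfl,
          if_neg hij]
        ring
      · rcases eq_or_ne j s with rfl | hsj
        · rw [hΓiis j, if_neg (Ne.symm hij), hΓjjj, hΓsjj i hij, hΓjji,
            if_neg (fun h : j = i => hij h.symm), if_pos rfl]
          have h1 : ((x j)^m)⁻¹ * (x j)^m = 1 := inv_mul_cancel₀ (pow_ne_zero m (hxne j))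
          linear_combination (-(β i j * a j)) * h1
        · rw [hΓiis s, if_neg (Ne.symm hsi), hΓsjj s (Ne.symm hsj),
            hΓijs s (Ne.symm hsi) (Ne.symm hsj),
            hΓsji s (Ne.symm hsi) (Ne.symm hsj), if_neg (Ne.symm hsi), if_neg (Ne.symm hsj)]
          ring
    have hsum_eq : (∑ s, (Christoffel M i i s x * Christoffel M s j j x
          - Christoffel M i j s x * Christoffel M s j i x))
        = ((x j)^m)⁻¹ * (∑ s, β i s * a s * (x s)^m)
          + (-((m:ℝ)/(2 * x i)) * ((x i)^m * ((x j)^m)⁻¹ * a i) - β i j * β i j)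
          + (β i j * β j j - (x i)^m * ((x j)^m)⁻¹ * a i * β j i
              - β i j * a j - β i j * ((m:ℝ)/(2 * x j))) := by
      rw [Finset.sum_congr rfl (fun s _ => hsummand s)]
      rw [Finset.sum_add_distrib, Finset.sum_add_distrib,
        Finset.sum_ite_eq' Finset.univ i, Finset.sum_ite_eq' Finset.univ j,
        ← Finset.mul_sum]
      simp
    -- outer derivatives
    have d1 : DifferentiableAt ℝ (fun y : Fin n → ℝ => (y i)^m) x :=
      diffAt_coord i (differentiableAt_pow m)
    have d2 : DifferentiableAt ℝ (fun y : Fin n → ℝ => ((y j)^m)⁻¹) x :=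
      diffAt_coord j ((differentiableAt_pow m).inv (pow_ne_zero m (hxne j)))
    have hpdΓ1 : pd (Christoffel M i j j) i x
        = ((m:ℝ) * (x i)^m / x i) * ((x j)^m)⁻¹ * a i
          + (x i)^m * ((x j)^m)⁻¹ * pd A i x := by
      rw [pd_congr (Filter.eventually_of_mem (hUo.mem_nhds hx) (fun y hy => hΓA y hy)) i]
      have d3 : DifferentiableAt ℝ A x := cd_diffAt hUo hAs hx
      rw [pd_mul (f := fun y => y i ^ m * (y j ^ m)⁻¹) (d1.mul d2) d3 i, pd_mul d1 d2 i, pd_coord_pow i i m,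
        pd_coord_pow_inv j i m (hxne j), if_pos rfl, if_neg (Ne.symm hij)]
      have hm1 : (m:ℝ) * (x i)^(m-1) = (m:ℝ) * (x i)^m / x i := by
        cases m with
        | zero => simp
        | succ k =>
            rw [pow_succ]
            field_simp [hxne i]
            simp
      rw [hm1, hAx]
      ring
    have hpdΓ2 : pd (Christoffel M i j i) j x = pd B j x :=
      pd_congr (Filter.eventually_of_mem (hUo.mem_nhds hx) (fun y hy => hΓB y hy)) j
    -- assemble
    have key : (∑ s, β i s * a s * (x s)^m)
          + (pd A i x - β j i * a i) * (x i)^m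
          + (-(pd B j x) + β i j * β j j - β i j * a j - β i j * β i j) * (x j)^m
          + (a i / (2 * x i)) * ((m:ℝ) * (x i)^m)
          + (-(β i j) / (2 * x j)) * ((m:ℝ) * (x j)^m)
        = Curv M i j i j x * (x j)^m := by
      have hC : Curv M i j i j x = pd (Christoffel M i j j) i x
          - pd (Christoffel M i j i) j x
          + ∑ s, (Christoffel M i i s x * Christoffel M s j j x
              - Christoffel M i j s x * Christoffel M s j i x) := rfl
      rw [hC, hpdΓ1, hpdΓ2, hsum_eq]
      have h1 : ((x j)^m)⁻¹ * (x j)^m = 1 := inv_mul_cancel₀ (pow_ne_zero m (hxne j))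
      linear_combination (-(((m:ℝ) * (x i)^m / x i) * a i + (x i)^m * pd A i x
        + (∑ s, β i s * a s * (x s)^m)
        + (-((m:ℝ)/(2 * x i))) * ((x i)^m * a i)
        + (-((x i)^m * a i * β j i)))) * h1
    have hexp : (∑ s, (β i s * a s
        + (if s = i then pd A i x - β j i * a i else 0)
        + (if s = j then -(pd B j x) + β i j * β j j - β i j * a j - β i j * β i j else 0))
          * (x s)^m)
        = (∑ s, β i s * a s * (x s)^m)
          + (pd A i x - β j i * a i) * (x i)^m
          + (-(pd B j x) + β i j * β j j - β i j * a j - β i j * β i j) * (x j)^m := by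
      have hpt : ∀ s, (β i s * a s
          + (if s = i then pd A i x - β j i * a i else 0)
          + (if s = j then -(pd B j x) + β i j * β j j - β i j * a j - β i j * β i j else 0))
            * (x s)^m
          = β i s * a s * (x s)^m
            + (if s = i then (pd A i x - β j i * a i) * (x s)^m else 0)
            + (if s = j then (-(pd B j x) + β i j * β j j - β i j * a j - β i j * β i j)
                * (x s)^m else 0) := by
        intro s; split_ifs <;> ring
      rw [Finset.sum_congr rfl (fun s _ => hpt s)]
      rw [Finset.sum_add_distrib, Finset.sum_add_distrib,
        Finset.sum_ite_eq' Finset.univ i, Finset.sum_ite_eq' Finset.univ j]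
      simp
    rw [hexp]
    have : (a i / (2 * x i)) * (m : ℝ) * (x i)^m = (a i / (2 * x i)) * ((m:ℝ) * (x i)^m) := by
      ring
    rw [this]
    have : (-(β i j) / (2 * x j)) * (m : ℝ) * (x j)^m
        = (-(β i j) / (2 * x j)) * ((m:ℝ) * (x j)^m) := by
      ring
    rw [this, key, hcurv0, zero_mul]
  -- Vandermonde
  have hdj : -(β i j) / (2 * x j) = 0 := by
    apply vand_key x i j hij (fun s t h => hdist x hx s t h) (hxne j)
      (fun s => β i s * a s
        + (if s = i then pd A i x - β j i * a i else 0)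
        + (if s = j then -(pd B j x) + β i j * β j j - β i j * a j - β i j * β i j else 0))
      (a i / (2 * x i))
    intro m hm
    exact hvdm m hm
  have hβ0 : β i j = 0 := by
    have h2 : (2 : ℝ) * x j ≠ 0 := mul_ne_zero two_ne_zero (hxne j)
    field_simp at hdj
    simpa [hxne j] using hdj
  rw [hβ] at hβ0
  have h2 : (2 : ℝ) * gd x i ≠ 0 := mul_ne_zero two_ne_zero (hgne i)
  exact (div_eq_zero_iff.1 hβ0).resolve_right h2
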